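/- Let K ∈ L¹(ℝⁿ), 0 ≤ θ < 1, 0 < δ < 1, and define [K]_{θ} := sup_{0<R<1} sup_{|y|<R} ∫_{|x| ≥ 2R^{1-θ}} |K(x - y) - K(x)| dx. Let f ∈ L^∞(ℝⁿ) vanish on {|y| < 2δ^{1-θ}} and set a_δ := ∫ K(-y) f(y) dy. Then (1/|B(0,δ)|) ∫_{B(0,δ)} |(K∗f)(x) - a_δ| dx ≤ [K]_θ ‖f‖_{L^∞}. -/

import Mathlib

open MeasureTheory Metric

/-!
For `x` in the ball, `(K ∗ f)(x) - a_δ = ∫ (K(x - y) - K(-y)) f(y) dy`, and `f` lives on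
`S = {2δ^{1-θ} ≤ |y|}`, so this is at most `‖f‖_∞ ∫_S |K(x - y) - K(-y)| dy`. Substituting
`y ↦ -y`, which preserves `S`, turns the integral into the kernel condition at `R = δ` with
shift `-x`. The bound is thus pointwise on the ball, hence also for the average.
-/

theorem norm_integral_mul_le_mul_setIntegral_norm {α 𝕜 : Type*} [MeasurableSpace α]
    {μ : Measure α} [NormedRing 𝕜] [NormedSpace ℝ 𝕜] {g f : α → 𝕜} (hg : Integrable g μ)
    {S : Set α} (hS : MeasurableSet S) {C : ℝ} (hC : ∀ y, ‖f y‖ ≤ C) (hfS : ∀ y ∉ S, f y = 0) :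
    ‖∫ y, g y * f y ∂μ‖ ≤ C * ∫ y in S, ‖g y‖ ∂μ := by
  rw [← integral_const_mul, ← integral_indicator hS]
  refine norm_integral_le_of_norm_le ((hg.norm.const_mul C).indicator hS)
    (.of_forall fun y => ?_)
  by_cases hy : y ∈ S
  · rw [Set.indicator_of_mem hy, mul_comm C]
    exact (norm_mul_le _ _).trans (by gcongr; exact hC y)
  · simp [Set.indicator_of_notMem hy, hfS y hy]

theorem setIntegral_comp_neg_of_neg_eq {G E : Type*} [InvolutiveNeg G] [MeasurableSpace G]
    [MeasurableNeg G] {μ : Measure G} [μ.IsNegInvariant] [NormedAddCommGroup E] [NormedSpace ℝ E]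
    {S : Set G} (hS : -S = S) (F : G → E) :
    ∫ y in S, F (-y) ∂μ = ∫ y in S, F y ∂μ := by
  conv_rhs => rw [← hS]
  rw [← (Measure.measurePreserving_neg μ).setIntegral_preimage_emb
    measurableEmbedding_neg F (-S), Set.neg_preimage, neg_neg]

section

variable {G : Type*} [AddGroup G] [MeasurableSpace G] [MeasurableAdd G] [MeasurableNeg G]
  {μ : Measure G} [μ.IsAddLeftInvariant] [μ.IsNegInvariant]
  {𝕜 : Type*} [NormedRing 𝕜] [NormedSpace ℝ 𝕜]

theorem norm_integral_comp_sub_mul_sub_le {K f : G → 𝕜} (hK : Integrable K μ)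
    (hf : AEStronglyMeasurable f μ) {S : Set G} (hS : MeasurableSet S) {C : ℝ}
    (hC : ∀ y, ‖f y‖ ≤ C) (hfS : ∀ y ∉ S, f y = 0) (x : G) :
    ‖(∫ y, K (x - y) * f y ∂μ) - ∫ y, K (-y) * f y ∂μ‖ ≤
      C * ∫ y in S, ‖K (x - y) - K (-y)‖ ∂μ := by
  have hKx : Integrable (fun y => K (x - y)) μ := (integrable_comp_sub_left K x).2 hK
  have hK0 : Integrable (fun y => K (-y)) μ := by
    simpa using (integrable_comp_sub_left K (0 : G)).2 hK
  have hbdd : ∀ᵐ y ∂μ, ‖f y‖ ≤ C := .of_forall hC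
  rw [← integral_sub (hKx.mul_bdd hf hbdd) (hK0.mul_bdd hf hbdd)]
  simp_rw [← sub_mul]
  exact norm_integral_mul_le_mul_setIntegral_norm (hKx.sub hK0) hS hC hfS

end

theorem inv_mul_setIntegral_norm_le {α E : Type*} [MeasurableSpace α] {μ : Measure α}
    [NormedAddCommGroup E] {F : α → E} {s : Set α} (hs : μ s < ⊤) (hne : s.Nonempty)
    {M : ℝ} (hF : ∀ x ∈ s, ‖F x‖ ≤ M) :
    (μ s).toReal⁻¹ * ∫ x in s, ‖F x‖ ∂μ ≤ M := by
  have hM : 0 ≤ M := (norm_nonneg _).trans (hF _ hne.some_mem)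
  have hint : ∫ x in s, ‖F x‖ ∂μ ≤ M * (μ s).toReal :=
    (Real.le_norm_self _).trans <| norm_setIntegral_le_of_norm_le_const hs fun x hx =>
      (norm_norm (F x)).trans_le (hF x hx)
  rcases eq_or_lt_of_le (ENNReal.toReal_nonneg : 0 ≤ (μ s).toReal) with h0 | hpos
  · simp [← h0, hM]
  · rw [inv_mul_le_iff₀ hpos, mul_comm]
    exact hint

theorem stmt9_general (n : ℕ) (K f : EuclideanSpace ℝ (Fin n) → ℂ)
    (hK : Integrable K) (hf : Measurable f)
    (θ δ A Cf : ℝ) (hδ : 0 < δ) (hδ1 : δ < 1)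
    (hA : ∀ R : ℝ, 0 < R → R < 1 → ∀ y : EuclideanSpace ℝ (Fin n), ‖y‖ < R →
      (∫ x in {x : EuclideanSpace ℝ (Fin n) | 2 * R ^ (1 - θ) ≤ ‖x‖},
        ‖K (x - y) - K x‖) ≤ A)
    (hCf : ∀ y, ‖f y‖ ≤ Cf)
    (hsupp : ∀ y, ‖y‖ < 2 * δ ^ (1 - θ) → f y = 0) :
    (volume (ball (0 : EuclideanSpace ℝ (Fin n)) δ)).toReal⁻¹ *
        ∫ x in ball (0 : EuclideanSpace ℝ (Fin n)) δ,
          ‖(∫ y, K (x - y) * f y) - ∫ y, K (-y) * f y‖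
      ≤ A * Cf := by
  set S : Set (EuclideanSpace ℝ (Fin n)) := {y | 2 * δ ^ (1 - θ) ≤ ‖y‖}
  have hCf0 : 0 ≤ Cf := (norm_nonneg _).trans (hCf 0)
  have hS_neg : -S = S := by ext y; simp [S]
  refine inv_mul_setIntegral_norm_le measure_ball_lt_top (nonempty_ball.2 hδ) fun x hx => ?_
  calc _ ≤ Cf * ∫ y in S, ‖K (x - y) - K (-y)‖ :=
        norm_integral_comp_sub_mul_sub_le hK hf.aestronglyMeasurable
          (measurableSet_le measurable_const measurable_norm) hCf
          (fun y hy => hsupp y (not_le.1 hy)) x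
    _ = Cf * ∫ y in S, ‖K (y - -x) - K y‖ := by
        rw [← setIntegral_comp_neg_of_neg_eq hS_neg]
        simp only [sub_neg_eq_add, neg_neg, add_comm]
    _ ≤ Cf * A := by
        gcongr
        exact hA δ hδ hδ1 (-x) (by simpa using hx)
    _ = A * Cf := mul_comm _ _

/-- If `K ∈ L¹(ℝⁿ)` satisfies the Fefferman oscillation kernel condition with bound `A`,
and `f ∈ L^∞` vanishes on `{|y| < 2δ^{1-θ}}`, then the average over `B(0,δ)` of
`|(K∗f)(x) - a_δ|` is at most `A ‖f‖_∞`, where `a_δ = ∫ K(-y) f(y) dy`. -/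
theorem stmt9 (n : ℕ) (K f : EuclideanSpace ℝ (Fin n) → ℂ)
    (hK : Integrable K) (hf : Measurable f)
    (θ δ A Cf : ℝ) (hθ : 0 ≤ θ) (hθ1 : θ < 1) (hδ : 0 < δ) (hδ1 : δ < 1)
    (hA : ∀ R : ℝ, 0 < R → R < 1 → ∀ y : EuclideanSpace ℝ (Fin n), ‖y‖ < R →
      (∫ x in {x : EuclideanSpace ℝ (Fin n) | 2 * R ^ (1 - θ) ≤ ‖x‖},
        ‖K (x - y) - K x‖) ≤ A)
    (hCf : ∀ y, ‖f y‖ ≤ Cf)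
    (hsupp : ∀ y, ‖y‖ < 2 * δ ^ (1 - θ) → f y = 0) :
    (volume (ball (0 : EuclideanSpace ℝ (Fin n)) δ)).toReal⁻¹ *
        ∫ x in ball (0 : EuclideanSpace ℝ (Fin n)) δ,
          ‖(∫ y, K (x - y) * f y) - ∫ y, K (-y) * f y‖
      ≤ A * Cf :=
  stmt9_general n K f hK hf θ δ A Cf hδ hδ1 hA hCf hsupp
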